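/- Let N ≥ 1, η_α = exp(2πiα/N) for α = 1,…,N, and fix β ∈ {1,…,N}. Then ∑_{α≠β} (η_α + η_β)/(η_α - η_β) = 0, where the sum runs over all α ∈ {1,…,N} with α ≠ β. -/

import Mathlib

/-!
`α ↦ η N α` maps `{1, …, N}` bijectively onto the `N`-th roots of unity, so with `w = η N β` the
sum is `∑ (z + w) / (z - w)` over the roots `z ≠ w`. The reflection `z ↦ w² / z` permutes these
roots and negates each term, so the sum equals its own negative.
-/

open Finset Complex

noncomputable def η (N α : ℕ) : ℂ := Complex.exp (2 * Real.pi * Complex.I * α / N)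

open Polynomial

section Reflection

variable {K : Type*} [Field K]

theorem add_div_sub_eq_neg_of_mul_eq_sq {a b w : K} (hab : a * b = w ^ 2) (ha : a ≠ w)
    (hb : b ≠ w) : (b + w) / (b - w) = -((a + w) / (a - w)) := by
  rw [← neg_div, div_eq_div_iff (sub_ne_zero.mpr hb) (sub_ne_zero.mpr ha)]
  linear_combination 2 * hab

theorem eq_zero_of_eq_neg [NeZero (2 : K)] {S : K} (h : S = -S) : S = 0 := by
  have : 2 * S = 0 := by linear_combination h
  exact (mul_eq_zero.mp this).resolve_left two_ne_zero

theorem sum_nthRootsFinset_erase_add_div_sub [DecidableEq K] [NeZero (2 : K)] {n : ℕ} {w : K}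
    (hw : w ∈ nthRootsFinset n (1 : K)) :
    ∑ z ∈ (nthRootsFinset n (1 : K)).erase w, (z + w) / (z - w) = 0 := by
  have hn : 0 < n := Nat.pos_of_ne_zero (by rintro rfl; simp at hw)
  have hw0 : w ≠ 0 := ne_zero_of_mem_nthRootsFinset one_ne_zero hw
  have hwn : w ^ n = 1 := (mem_nthRootsFinset hn (1 : K)).mp hw
  set s := (nthRootsFinset n (1 : K)).erase w
  have hs : ∀ z ∈ s, z ≠ 0 ∧ z ≠ w ∧ z ^ n = 1 := fun z hz => by
    obtain ⟨hzw, hz⟩ := mem_erase.mp hz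
    exact ⟨ne_zero_of_mem_nthRootsFinset one_ne_zero hz, hzw,
      (mem_nthRootsFinset hn (1 : K)).mp hz⟩
  have hfix : ∀ z ≠ 0, w ^ 2 / z = w → z = w := fun z hz0 h => by
    field_simp at h; exact h.symm
  have hσ : ∀ z ∈ s, w ^ 2 / z ∈ s := fun z hz => by
    obtain ⟨hz0, hzw, hzn⟩ := hs z hz
    refine mem_erase.mpr ⟨fun h => hzw (hfix z hz0 h), (mem_nthRootsFinset hn (1 : K)).mpr ?_⟩
    rw [div_pow, pow_right_comm, hwn, hzn, one_pow, div_one]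
  have hσσ : ∀ z ∈ s, w ^ 2 / (w ^ 2 / z) = z := fun z _ => div_div_cancel₀ (by positivity)
  apply eq_zero_of_eq_neg
  calc ∑ z ∈ s, (z + w) / (z - w)
      = ∑ z ∈ s, (w ^ 2 / z + w) / (w ^ 2 / z - w) :=
        sum_nbij' (w ^ 2 / ·) (w ^ 2 / ·) hσ hσ hσσ hσσ fun z hz => by rw [hσσ z hz]
    _ = ∑ z ∈ s, -((z + w) / (z - w)) := sum_congr rfl fun z hz => by
        obtain ⟨hz0, hzw, -⟩ := hs z hz
        exact add_div_sub_eq_neg_of_mul_eq_sq (mul_div_cancel₀ _ hz0) hzw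
          (fun h => hzw (hfix z hz0 h))
    _ = -∑ z ∈ s, (z + w) / (z - w) := sum_neg_distrib _

end Reflection

theorem η_eq_pow (N α : ℕ) : η N α = exp (2 * Real.pi * I / N) ^ α := by
  rw [η, ← Complex.exp_nat_mul]
  ring_nf

theorem injOn_η_Icc (N : ℕ) : Set.InjOn (η N) (Icc 1 N) := by
  intro a ha b hb hab
  rcases Nat.eq_zero_or_pos N with rfl | hN
  · simp at ha
  have hζ := isPrimitiveRoot_exp N hN.ne'
  rw [η_eq_pow, η_eq_pow, (hζ.isOfFinOrder hN.ne').pow_eq_pow_iff_modEq, ← hζ.eq_orderOf] at hab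
  simp only [coe_Icc, Set.mem_Icc] at ha hb
  exact hab.eq_of_abs_lt (by rw [abs_lt]; omega)

theorem image_η_Icc {N : ℕ} (hN : N ≠ 0) : (Icc 1 N).image (η N) = nthRootsFinset N (1 : ℂ) := by
  have hζ := isPrimitiveRoot_exp N hN
  refine eq_of_subset_of_card_le (fun z hz => ?_) ?_
  · obtain ⟨α, -, rfl⟩ := mem_image.mp hz
    rw [mem_nthRootsFinset (Nat.pos_of_ne_zero hN), η_eq_pow, pow_right_comm, hζ.pow_eq_one,
      one_pow]
  · rw [hζ.card_nthRootsFinset, card_image_of_injOn (injOn_η_Icc N), Nat.card_Icc,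
      Nat.add_sub_cancel]

theorem stmt_11_general (N : ℕ) (β : ℕ) (hβ : β ∈ Finset.Icc 1 N) :
    ∑ α ∈ (Finset.Icc 1 N).erase β, (η N α + η N β) / (η N α - η N β) = 0 := by
  classical
  have hN : N ≠ 0 := by rintro rfl; simp at hβ
  set F : ℂ → ℂ := fun z => (z + η N β) / (z - η N β)
  have hηβ : η N β ∈ nthRootsFinset N (1 : ℂ) := image_η_Icc hN ▸ mem_image_of_mem _ hβ
  calc ∑ α ∈ (Icc 1 N).erase β, F (η N α)
      = ∑ z ∈ (Icc 1 N).image (η N), F z - F (η N β) := by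
        rw [sum_erase_eq_sub hβ, sum_image (injOn_η_Icc N)]
    _ = ∑ z ∈ (nthRootsFinset N (1 : ℂ)).erase (η N β), F z := by
        rw [sum_erase_eq_sub hηβ, image_η_Icc hN]
    _ = 0 := sum_nthRootsFinset_erase_add_div_sub hηβ

theorem stmt_11 (N : ℕ) (hN : 1 ≤ N) (β : ℕ) (hβ : β ∈ Finset.Icc 1 N) :
    ∑ α ∈ (Finset.Icc 1 N).erase β, (η N α + η N β) / (η N α - η N β) = 0 :=
  stmt_11_general N β hβ
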